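/- arXiv:1407.1458 — 5 statements merged into one kernel-verified Lean document; each statement's English description precedes it below -/
import Mathlib

section
/- Let H be a Hilbert space, g, h ∈ H, (A_j)_{j=1}^J unitary operators, (P_j) a decreasing nest of orthogonal projections and (Q_j) an increasing nest with Q₀ = 0, such that for each j: (i) A_j h ∈ range(Q_j); (ii) A_j P_{j−1} = Q_{j−1} A_j for j > 1; (iii) g ⊥ A_j(range(P_j)) for all j. Then (∑_{j=1}^J |⟨g, A_j h⟩|²)^{1/2} ≤ 2‖g‖‖h‖. -/
open scoped InnerProductSpace

lemma sa_inner {H : Type*} [NormedAddCommGroup H] [InnerProductSpace ℂ H] [CompleteSpace H] (T : H →L[ℂ] H) (hsa : IsSelfAdjoint T) (x y : H) :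
    ⟪T x, y⟫_ℂ = ⟪x, T y⟫_ℂ := by
  conv_lhs => rw [← hsa.star_eq]
  rw [ContinuousLinearMap.star_eq_adjoint, ContinuousLinearMap.adjoint_inner_left]

lemma proj_norm_sq {H : Type*} [NormedAddCommGroup H] [InnerProductSpace ℂ H] [CompleteSpace H] (T : H →L[ℂ] H) (hsa : IsSelfAdjoint T) (hid : T.comp T = T) (x : H) :
    ‖T x‖ ^ 2 = (⟪x, T x⟫_ℂ).re := by
  have h1 : ⟪T x, T x⟫_ℂ = ⟪x, T x⟫_ℂ := by
    rw [sa_inner T hsa]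
    change ⟪x, (T.comp T) x⟫_ℂ = _
    rw [hid]
  rw [← @inner_self_eq_norm_sq ℂ, h1]; rfl

lemma proj_norm_le {H : Type*} [NormedAddCommGroup H] [InnerProductSpace ℂ H] [CompleteSpace H] (T : H →L[ℂ] H) (hsa : IsSelfAdjoint T) (hid : T.comp T = T) (x : H) :
    ‖T x‖ ≤ ‖x‖ := by
  rcases eq_or_lt_of_le (norm_nonneg (T x)) with h0 | h0
  · rw [← h0]; exact norm_nonneg x
  have h1 : ‖T x‖ ^ 2 ≤ ‖x‖ * ‖T x‖ := by
    rw [proj_norm_sq T hsa hid]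
    calc (⟪x, T x⟫_ℂ).re ≤ ‖⟪x, T x⟫_ℂ‖ := Complex.re_le_norm _
      _ ≤ ‖x‖ * ‖T x‖ := norm_inner_le_norm x (T x)
  nlinarith

/-- Abstract Hilbert-space core of the new proof of Paley's theorem: given unitaries `A j`, a
decreasing nest of orthogonal projections `P j` and an increasing nest `Q j` with `Q 0 = 0`, such
that (i) `A j h ∈ range (Q j)`, (ii) `A j ∘ P (j-1) = Q (j-1) ∘ A j` for `j > 1`, and (iii)
`g ⊥ A j (range (P j))`, one has `(∑ j, |⟨g, A j h⟩|²)^{1/2} ≤ 2 ‖g‖ ‖h‖`. -/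
theorem two_nest_paley_estimate {H : Type*} [NormedAddCommGroup H]
    [InnerProductSpace ℂ H] [CompleteSpace H]
    (J : ℕ) (g h : H) (A : ℕ → H ≃ₗᵢ[ℂ] H) (P Q : ℕ → H →L[ℂ] H)
    (hPsa : ∀ j, j ≤ J → IsSelfAdjoint (P j))
    (hPidem : ∀ j, j ≤ J → (P j).comp (P j) = P j)
    (hQsa : ∀ j, j ≤ J → IsSelfAdjoint (Q j))
    (hQidem : ∀ j, j ≤ J → (Q j).comp (Q j) = Q j)
    (hQ0 : Q 0 = 0)
    -- decreasing nest: range (P j) ⊇ range (P i) for j ≤ i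
    (hPnest : ∀ j i, j ≤ i → i ≤ J → (P j).comp (P i) = P i)
    -- increasing nest: range (Q j) ⊆ range (Q i) for j ≤ i
    (hQnest : ∀ j i, j ≤ i → i ≤ J → (Q i).comp (Q j) = Q j)
    (hmem : ∀ j, 1 ≤ j → j ≤ J → A j h = Q j (A j h))
    (hintertwine : ∀ j, 2 ≤ j → j ≤ J → ∀ x : H, A j (P (j - 1) x) = Q (j - 1) (A j x))
    (horth : ∀ j, 1 ≤ j → j ≤ J → ∀ x : H, ⟪g, A j (P j x)⟫_ℂ = 0) :
    Real.sqrt (∑ j ∈ Finset.Icc 1 J, ‖⟪g, A j h⟫_ℂ‖ ^ 2) ≤ 2 * ‖g‖ * ‖h‖ := by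
  set a : ℕ → ℝ := fun j => ‖(Q j - Q (j - 1)) g‖ with ha
  set b : ℕ → ℝ := fun j => ‖(P (j - 1) - P j) h‖ with hb
  -- pointwise bound
  have key : ∀ j ∈ Finset.Icc 1 J, ‖⟪g, A j h⟫_ℂ‖ ≤ a j * ‖h‖ + ‖g‖ * b j := by
    intro j hj
    rw [Finset.mem_Icc] at hj
    obtain ⟨hj1, hjJ⟩ := hj
    have hsplit : ⟪g, A j h⟫_ℂ = ⟪(Q j - Q (j - 1)) g, A j h⟫_ℂ + ⟪Q (j - 1) g, A j h⟫_ℂ := by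
      rw [← inner_add_left]
      simp only [ContinuousLinearMap.sub_apply, sub_add_cancel]
      rw [sa_inner (Q j) (hQsa j hjJ), ← hmem j hj1 hjJ]
    have hfirst : ‖⟪(Q j - Q (j - 1)) g, A j h⟫_ℂ‖ ≤ a j * ‖h‖ := by
      calc ‖⟪(Q j - Q (j - 1)) g, A j h⟫_ℂ‖ ≤ ‖(Q j - Q (j - 1)) g‖ * ‖A j h‖ :=
            norm_inner_le_norm _ _
        _ = a j * ‖h‖ := by rw [(A j).norm_map]
    have hsecond : ‖⟪Q (j - 1) g, A j h⟫_ℂ‖ ≤ ‖g‖ * b j := by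
      rcases eq_or_lt_of_le hj1 with h1 | h2
      · rw [← h1]
        simp [hQ0]
        positivity
      · have hj2 : 2 ≤ j := h2
        have hrw : ⟪Q (j - 1) g, A j h⟫_ℂ = ⟪g, A j ((P (j - 1) - P j) h)⟫_ℂ := by
          rw [sa_inner (Q (j - 1)) (hQsa (j - 1) (le_trans (Nat.sub_le j 1) hjJ)),
            ← hintertwine j hj2 hjJ h]
          have : (P (j - 1) - P j) h = P (j - 1) h - P j h := by
            simp [ContinuousLinearMap.sub_apply]
          rw [this, map_sub, inner_sub_right, horth j hj1 hjJ h, sub_zero]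
        rw [hrw]
        calc ‖⟪g, A j ((P (j - 1) - P j) h)⟫_ℂ‖ ≤ ‖g‖ * ‖A j ((P (j - 1) - P j) h)‖ :=
              norm_inner_le_norm _ _
          _ = ‖g‖ * b j := by rw [(A j).norm_map]
    calc ‖⟪g, A j h⟫_ℂ‖ ≤ ‖⟪(Q j - Q (j - 1)) g, A j h⟫_ℂ‖ + ‖⟪Q (j - 1) g, A j h⟫_ℂ‖ := by
          rw [hsplit]; exact norm_add_le _ _
      _ ≤ a j * ‖h‖ + ‖g‖ * b j := add_le_add hfirst hsecond
  -- sum of a j ^ 2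
  have hasum : ∑ j ∈ Finset.Icc 1 J, a j ^ 2 ≤ ‖g‖ ^ 2 := by
    have hterm : ∀ j ∈ Finset.Icc 1 J,
        a j ^ 2 = (⟪g, Q j g⟫_ℂ).re - (⟪g, Q (j - 1) g⟫_ℂ).re := by
      intro j hj
      rw [Finset.mem_Icc] at hj
      obtain ⟨hj1, hjJ⟩ := hj
      have hj1J : j - 1 ≤ J := le_trans (Nat.sub_le j 1) hjJ
      have hQQ : (Q j).comp (Q (j - 1)) = Q (j - 1) := hQnest (j - 1) j (Nat.sub_le j 1) hjJ
      have hQQ' : (Q (j - 1)).comp (Q j) = Q (j - 1) := by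
        have h1 : Q j * Q (j - 1) = Q (j - 1) := hQQ
        have h2 := congrArg star h1
        rw [star_mul, (hQsa j hjJ).star_eq, (hQsa (j - 1) hj1J).star_eq] at h2
        exact h2
      have hDsa : IsSelfAdjoint (Q j - Q (j - 1)) := (hQsa j hjJ).sub (hQsa (j - 1) hj1J)
      have hDid : (Q j - Q (j - 1)).comp (Q j - Q (j - 1)) = Q j - Q (j - 1) := by
        simp only [ContinuousLinearMap.comp_sub, ContinuousLinearMap.sub_comp,
          hQidem j hjJ, hQidem (j - 1) hj1J, hQQ, hQQ']
        abel
      calc a j ^ 2 = (⟪g, (Q j - Q (j - 1)) g⟫_ℂ).re :=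
            proj_norm_sq (Q j - Q (j - 1)) hDsa hDid g
        _ = (⟪g, Q j g⟫_ℂ).re - (⟪g, Q (j - 1) g⟫_ℂ).re := by
            simp [ContinuousLinearMap.sub_apply, inner_sub_right, Complex.sub_re]
    rw [Finset.sum_congr rfl hterm]
    have htel : ∑ j ∈ Finset.Icc 1 J, ((⟪g, Q j g⟫_ℂ).re - (⟪g, Q (j - 1) g⟫_ℂ).re)
        = (⟪g, Q J g⟫_ℂ).re - (⟪g, Q 0 g⟫_ℂ).re := by
      rw [show Finset.Icc 1 J = Finset.Ico 1 (J + 1) by rfl, Finset.sum_Ico_eq_sum_range]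
      simp only [Nat.add_sub_cancel]
      have : ∀ i, (1 + i) - 1 = i := fun i => by omega
      calc ∑ i ∈ Finset.range J, ((⟪g, Q (1 + i) g⟫_ℂ).re - (⟪g, Q (1 + i - 1) g⟫_ℂ).re)
          = ∑ i ∈ Finset.range J, ((⟪g, Q (i + 1) g⟫_ℂ).re - (⟪g, Q i g⟫_ℂ).re) := by
            refine Finset.sum_congr rfl fun i _ => by rw [this i, Nat.add_comm 1 i]
        _ = (⟪g, Q J g⟫_ℂ).re - (⟪g, Q 0 g⟫_ℂ).re :=
            Finset.sum_range_sub (fun i => (⟪g, Q i g⟫_ℂ).re) J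
    rw [htel, hQ0]
    simp only [ContinuousLinearMap.zero_apply, inner_zero_right, Complex.zero_re, sub_zero]
    rw [← proj_norm_sq (Q J) (hQsa J le_rfl) (hQidem J le_rfl) g]
    have := proj_norm_le (Q J) (hQsa J le_rfl) (hQidem J le_rfl) g
    nlinarith [norm_nonneg (Q J g)]
  -- sum of b j ^ 2
  have hbsum : ∑ j ∈ Finset.Icc 1 J, b j ^ 2 ≤ ‖h‖ ^ 2 := by
    have hterm : ∀ j ∈ Finset.Icc 1 J,
        b j ^ 2 = (⟪h, P (j - 1) h⟫_ℂ).re - (⟪h, P j h⟫_ℂ).re := by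
      intro j hj
      rw [Finset.mem_Icc] at hj
      obtain ⟨hj1, hjJ⟩ := hj
      have hj1J : j - 1 ≤ J := le_trans (Nat.sub_le j 1) hjJ
      have hPP : (P (j - 1)).comp (P j) = P j := hPnest (j - 1) j (Nat.sub_le j 1) hjJ
      have hPP' : (P j).comp (P (j - 1)) = P j := by
        have h1 : P (j - 1) * P j = P j := hPP
        have h2 := congrArg star h1
        rw [star_mul, (hPsa (j - 1) hj1J).star_eq, (hPsa j hjJ).star_eq] at h2
        exact h2
      have hDsa : IsSelfAdjoint (P (j - 1) - P j) := (hPsa (j - 1) hj1J).sub (hPsa j hjJ)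
      have hDid : (P (j - 1) - P j).comp (P (j - 1) - P j) = P (j - 1) - P j := by
        simp only [ContinuousLinearMap.comp_sub, ContinuousLinearMap.sub_comp,
          hPidem j hjJ, hPidem (j - 1) hj1J, hPP, hPP']
        abel
      calc b j ^ 2 = (⟪h, (P (j - 1) - P j) h⟫_ℂ).re :=
            proj_norm_sq (P (j - 1) - P j) hDsa hDid h
        _ = (⟪h, P (j - 1) h⟫_ℂ).re - (⟪h, P j h⟫_ℂ).re := by
            simp [ContinuousLinearMap.sub_apply, inner_sub_right, Complex.sub_re]
    rw [Finset.sum_congr rfl hterm]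
    have htel : ∑ j ∈ Finset.Icc 1 J, ((⟪h, P (j - 1) h⟫_ℂ).re - (⟪h, P j h⟫_ℂ).re)
        = (⟪h, P 0 h⟫_ℂ).re - (⟪h, P J h⟫_ℂ).re := by
      rw [show Finset.Icc 1 J = Finset.Ico 1 (J + 1) by rfl, Finset.sum_Ico_eq_sum_range]
      simp only [Nat.add_sub_cancel]
      have h1 : ∀ i, (1 + i) - 1 = i := fun i => by omega
      calc ∑ i ∈ Finset.range J, ((⟪h, P (1 + i - 1) h⟫_ℂ).re - (⟪h, P (1 + i) h⟫_ℂ).re)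
          = -∑ i ∈ Finset.range J, ((⟪h, P (i + 1) h⟫_ℂ).re - (⟪h, P i h⟫_ℂ).re) := by
            rw [← Finset.sum_neg_distrib]
            refine Finset.sum_congr rfl fun i _ => by rw [h1 i, Nat.add_comm 1 i]; ring
        _ = (⟪h, P 0 h⟫_ℂ).re - (⟪h, P J h⟫_ℂ).re := by
            rw [Finset.sum_range_sub (fun i => (⟪h, P i h⟫_ℂ).re) J]; ring
    rw [htel]
    have h0 : (⟪h, P 0 h⟫_ℂ).re = ‖P 0 h‖ ^ 2 :=
      (proj_norm_sq (P 0) (hPsa 0 (Nat.zero_le J)) (hPidem 0 (Nat.zero_le J)) h).symm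
    have hJ : (⟪h, P J h⟫_ℂ).re = ‖P J h‖ ^ 2 :=
      (proj_norm_sq (P J) (hPsa J le_rfl) (hPidem J le_rfl) h).symm
    have h0le := proj_norm_le (P 0) (hPsa 0 (Nat.zero_le J)) (hPidem 0 (Nat.zero_le J)) h
    nlinarith [norm_nonneg (P 0 h), norm_nonneg (P J h), sq_nonneg (‖P J h‖)]
  -- combine
  have hS : ∑ j ∈ Finset.Icc 1 J, ‖⟪g, A j h⟫_ℂ‖ ^ 2
      ≤ ∑ j ∈ Finset.Icc 1 J, (2 * ‖h‖ ^ 2 * a j ^ 2 + 2 * ‖g‖ ^ 2 * b j ^ 2) := by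
    refine Finset.sum_le_sum fun j hj => ?_
    have hk := key j hj
    have hn : (0:ℝ) ≤ ‖⟪g, A j h⟫_ℂ‖ := norm_nonneg _
    nlinarith [sq_nonneg (a j * ‖h‖ - ‖g‖ * b j)]
  have hS2 : ∑ j ∈ Finset.Icc 1 J, (2 * ‖h‖ ^ 2 * a j ^ 2 + 2 * ‖g‖ ^ 2 * b j ^ 2)
      ≤ (2 * ‖g‖ * ‖h‖) ^ 2 := by
    rw [Finset.sum_add_distrib, ← Finset.mul_sum, ← Finset.mul_sum]
    have hg2 : (0:ℝ) ≤ 2 * ‖h‖ ^ 2 := by positivity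
    have hh2 : (0:ℝ) ≤ 2 * ‖g‖ ^ 2 := by positivity
    nlinarith [mul_le_mul_of_nonneg_left hasum hg2, mul_le_mul_of_nonneg_left hbsum hh2]
  have := Real.sqrt_le_sqrt (le_trans hS hS2)
  rwa [Real.sqrt_sq (by positivity)] at this
end

section
/- Let K' be a finite strongly lacunary subset of the strictly positive cone P' = P∖{0} of a partially ordered discrete abelian group Γ with compact dual G. Define the Riesz product R = ∏_{γ'∈K'} (1 + (γ' + conj(γ'))/2) as a function on G. Then R ≥ 0, R̂(0) = 1, ‖R‖₁ = 1, R̂(γ') ≥ 1/2 for every γ' ∈ K', and R̂ vanishes outside P ∪ (−P). -/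
/-!
Each factor `1 + (γ' + conj γ') / 2 = 1 + Re γ'` is nonnegative, so `R = |R|`. Expanding the
product writes `R = ∑_ε 2^{-m(ε)} ∏ γ'^{ε γ'}` over `ε ∈ {-1, 0, 1}^{K'}`, and by orthogonality of
characters `R̂(γ)` is the total weight of the `ε` whose word `∏ γ'^{ε γ'}` equals `γ`.
Strong lacunarity makes every nonzero word strictly positive or strictly negative: if `γ₀` is the
largest letter that occurs, the other letters multiply to something strictly between `γ₀⁻¹` and
`γ₀`, by induction peeling off the largest letter each time. So only `ε = 0` produces the word `1`,
the single letter `γ'` contributes `1/2` to `R̂(γ')`, and every word lies in `P ∪ P⁻¹`.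
-/

open MeasureTheory ComplexConjugate Finset

section StronglyLacunary

variable {ι Γ : Type*} [CommGroup Γ]

structure IsStronglyLacunary [PartialOrder Γ] (S : Finset ι) (γ : ι → Γ) : Prop where
  one_lt : ∀ i ∈ S, 1 < γ i
  sq_lt_or_sq_lt : ∀ i ∈ S, ∀ j ∈ S, i ≠ j → γ j ^ 2 < γ i ∨ γ i ^ 2 < γ j

namespace IsStronglyLacunary

variable [PartialOrder Γ] {S T : Finset ι} {γ : ι → Γ}

lemma mono (hT : IsStronglyLacunary T γ) (hST : S ⊆ T) : IsStronglyLacunary S γ :=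
  ⟨fun i hi => hT.one_lt i (hST hi), fun i hi j hj => hT.sq_lt_or_sq_lt i (hST hi) j (hST hj)⟩

variable [IsOrderedMonoid Γ]

lemma exists_sq_lt (hS : IsStronglyLacunary S γ) (hne : S.Nonempty) :
    ∃ k ∈ S, ∀ i ∈ S, i ≠ k → γ i ^ 2 < γ k := by
  obtain ⟨k, hk, hmax⟩ := S.exists_maximalFor γ hne
  refine ⟨k, hk, fun i hi hik =>
    (hS.sq_lt_or_sq_lt k hk i hi hik.symm).resolve_right fun hki => ?_⟩
  have hlt : γ k < γ i :=
    (lt_mul_of_one_lt_right' _ (hS.one_lt k hk)).trans (by rwa [pow_two] at hki)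
  exact hlt.not_ge (hmax hi hlt.le)

lemma inv_lt_prod_zpow (hS : IsStronglyLacunary S γ) {M : Γ} (hM : 1 < M)
    (hdom : ∀ i ∈ S, γ i ^ 2 < M) {ε : ι → ℤ} (hε : ∀ i ∈ S, -1 ≤ ε i) :
    M⁻¹ < ∏ i ∈ S, γ i ^ ε i := by
  classical
  induction S using Finset.strongInduction generalizing M with
  | H S ih =>
  rcases S.eq_empty_or_nonempty with rfl | hne
  · simpa using hM
  obtain ⟨k, hk, htop⟩ := hS.exists_sq_lt hne
  have hrest : (γ k)⁻¹ < ∏ i ∈ S.erase k, γ i ^ ε i :=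
    ih _ (S.erase_ssubset hk) (hS.mono (S.erase_subset k)) (hS.one_lt k hk)
      (fun i hi => htop i (mem_of_mem_erase hi) (ne_of_mem_erase hi))
      (fun i hi => hε i (mem_of_mem_erase hi))
  have hk_le : (γ k)⁻¹ ≤ γ k ^ ε k := by
    simpa using zpow_le_zpow_right (hS.one_lt k hk).le (hε k hk)
  rw [← S.mul_prod_erase _ hk]
  calc M⁻¹ < (γ k ^ 2)⁻¹ := inv_lt_inv_iff.2 (hdom k hk)
    _ = (γ k)⁻¹ * (γ k)⁻¹ := by rw [pow_two, mul_inv]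
    _ < γ k ^ ε k * ∏ i ∈ S.erase k, γ i ^ ε i := mul_lt_mul_of_le_of_lt hk_le hrest

lemma prod_zpow_lt (hS : IsStronglyLacunary S γ) {M : Γ} (hM : 1 < M)
    (hdom : ∀ i ∈ S, γ i ^ 2 < M) {ε : ι → ℤ} (hε : ∀ i ∈ S, ε i ≤ 1) :
    ∏ i ∈ S, γ i ^ ε i < M := by
  have h := hS.inv_lt_prod_zpow hM hdom (ε := -ε) fun i hi => by simpa using hε i hi
  simpa [zpow_neg, prod_inv_distrib] using h

lemma one_lt_or_lt_one_prod_zpow (hS : IsStronglyLacunary S γ) {ε : ι → ℤ}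
    (hε : ∀ i ∈ S, |ε i| ≤ 1) (hne : ∃ i ∈ S, ε i ≠ 0) :
    1 < ∏ i ∈ S, γ i ^ ε i ∨ ∏ i ∈ S, γ i ^ ε i < 1 := by
  classical
  set T := S.filter (ε · ≠ 0)
  have hT : IsStronglyLacunary T γ := hS.mono (filter_subset _ _)
  obtain ⟨i, hi, hεi⟩ := hne
  obtain ⟨k, hk, htop⟩ := hT.exists_sq_lt ⟨i, mem_filter.2 ⟨hi, hεi⟩⟩
  obtain ⟨hkS, hεk⟩ := mem_filter.1 hk
  have hprod : ∏ i ∈ S, γ i ^ ε i = γ k ^ ε k * ∏ i ∈ T.erase k, γ i ^ ε i := by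
    rw [T.mul_prod_erase (fun i => γ i ^ ε i) hk, prod_filter_of_ne]
    intro i _ h
    contrapose! h
    simp [h]
  have hrest := hT.mono (T.erase_subset k)
  have hdom : ∀ i ∈ T.erase k, γ i ^ 2 < γ k :=
    fun i hi => htop i (mem_of_mem_erase hi) (ne_of_mem_erase hi)
  have hεrest : ∀ i ∈ T.erase k, |ε i| ≤ 1 :=
    fun i hi => hε i (mem_filter.1 (mem_of_mem_erase hi)).1
  rw [hprod]
  obtain h | h : ε k = 1 ∨ ε k = -1 := by
    have := abs_le.1 (hε k hkS)
    omega
  · left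
    rw [h, zpow_one]
    exact inv_lt_iff_one_lt_mul'.1 <|
      hrest.inv_lt_prod_zpow (hT.one_lt k hk) hdom fun i hi => (abs_le.1 (hεrest i hi)).1
  · right
    rw [h, zpow_neg_one]
    exact inv_mul_lt_one_iff.2 <|
      hrest.prod_zpow_lt (hT.one_lt k hk) hdom fun i hi => (abs_le.1 (hεrest i hi)).2

end IsStronglyLacunary

lemma GroupCone.prod_zpow_mem_or_inv_mem_of_lacunary (C : GroupCone Γ) {S : Finset ι}
    {γ : ι → Γ} (hpos : ∀ i ∈ S, γ i ∈ C ∧ γ i ≠ 1)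
    (hlac : ∀ i ∈ S, ∀ j ∈ S, i ≠ j →
      (γ i * (γ j)⁻¹ * (γ j)⁻¹ ∈ C ∧ γ i * (γ j)⁻¹ * (γ j)⁻¹ ≠ 1) ∨
      (γ j * (γ i)⁻¹ * (γ i)⁻¹ ∈ C ∧ γ j * (γ i)⁻¹ * (γ i)⁻¹ ≠ 1))
    {ε : ι → ℤ} (hε : ∀ i ∈ S, |ε i| ≤ 1) (hne : ∃ i ∈ S, ε i ≠ 0) :
    (∏ i ∈ S, γ i ^ ε i ∈ C ∧ ∏ i ∈ S, γ i ^ ε i ≠ 1) ∨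
      ((∏ i ∈ S, γ i ^ ε i)⁻¹ ∈ C ∧ (∏ i ∈ S, γ i ^ ε i)⁻¹ ≠ 1) := by
  let _ := PartialOrder.mkOfGroupCone C
  have _ := IsOrderedMonoid.mkOfCone C
  have one_lt_iff (a : Γ) : 1 < a ↔ a ∈ C ∧ a ≠ 1 := by
    rw [lt_iff_le_and_ne, ne_comm]
    simp
  have sq_lt_iff (a b : Γ) : b ^ 2 < a ↔ a * b⁻¹ * b⁻¹ ∈ C ∧ a * b⁻¹ * b⁻¹ ≠ 1 := by
    rw [← one_lt_div', one_lt_iff, div_eq_mul_inv, pow_two, mul_inv, mul_assoc]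
  have hS : IsStronglyLacunary S γ :=
    ⟨fun i hi => (one_lt_iff _).2 (hpos i hi),
      fun i hi j hj hij => by simpa only [sq_lt_iff] using hlac i hi j hj hij⟩
  rw [← one_lt_iff, ← one_lt_iff, one_lt_inv']
  exact hS.one_lt_or_lt_one_prod_zpow hε hne

end StronglyLacunary

namespace PontryaginDual

variable {ι : Type*}

section Eval

variable {G : Type*} [Monoid G] [TopologicalSpace G]

@[simps]
noncomputable def evalHom (x : G) : PontryaginDual G →* Circle where
  toFun χ := χ x
  map_one' := rfl
  map_mul' _ _ := rfl

lemma coe_prod_zpow_apply (s : Finset ι) (χ : ι → PontryaginDual G) (n : ι → ℤ) (x : G) :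
    (((∏ i ∈ s, χ i ^ n i) x : Circle) : ℂ) = ∏ i ∈ s, (χ i x : ℂ) ^ n i := by
  change Circle.coeHom (evalHom x (∏ i ∈ s, χ i ^ n i)) = _
  simp only [map_prod, map_zpow, evalHom_apply]
  rfl

end Eval

variable {G : Type*} [Group G] [TopologicalSpace G] [MeasurableSpace G] [BorelSpace G]
  (μ : Measure G)

lemma integrable_coe_apply [IsFiniteMeasure μ] (χ : PontryaginDual G) :
    Integrable (fun x => (χ x : ℂ)) μ :=
  .of_bound (continuous_subtype_val.comp χ.continuous).aestronglyMeasurable 1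
    (Filter.Eventually.of_forall fun _ => (Circle.norm_coe _).le)

variable [ContinuousMul G] [μ.IsMulLeftInvariant]

lemma integral_coe_apply_eq_zero {χ : PontryaginDual G} (hχ : χ ≠ 1) :
    ∫ x, (χ x : ℂ) ∂μ = 0 := by
  obtain ⟨g, hg⟩ : ∃ g, χ g ≠ 1 := by
    by_contra! h
    exact hχ (PontryaginDual.ext h)
  have h : (χ g : ℂ) * ∫ x, (χ x : ℂ) ∂μ = ∫ x, (χ x : ℂ) ∂μ := by
    rw [← integral_const_mul]
    conv_rhs => rw [← integral_mul_left_eq_self _ g]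
    simp
  by_contra h0
  exact hg (Circle.coe_eq_one.1 ((mul_eq_right₀ h0).1 h))

lemma integral_sum_mul_conj [IsProbabilityMeasure μ] [DecidableEq (PontryaginDual G)]
    (s : Finset ι) (a : ι → ℂ) (χ : ι → PontryaginDual G) (ψ : PontryaginDual G) :
    ∫ x, (∑ i ∈ s, a i * χ i x) * conj (ψ x : ℂ) ∂μ = ∑ i ∈ s with χ i = ψ, a i := by
  have hpt : ∀ x, (∑ i ∈ s, a i * χ i x) * conj (ψ x : ℂ) =
      ∑ i ∈ s, a i * ((χ i * ψ⁻¹) x : ℂ) := fun x => by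
    rw [sum_mul]
    refine sum_congr rfl fun i _ => ?_
    change _ = a i * ((χ i x * (ψ x)⁻¹ : Circle) : ℂ)
    rw [Circle.coe_mul, Circle.coe_inv_eq_conj, mul_assoc]
  simp_rw [hpt]
  rw [integral_finsetSum _ fun i _ => (integrable_coe_apply μ _).const_mul (a i), sum_filter]
  refine sum_congr rfl fun i _ => ?_
  rw [integral_const_mul]
  split_ifs with h
  · simp [h]
  · rw [integral_coe_apply_eq_zero μ (mul_inv_eq_one.not.2 h), mul_zero]

end PontryaginDual

section RieszProduct

variable {ι G : Type*} [Fintype ι] [Group G] [TopologicalSpace G]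

noncomputable def rieszProduct (χ : ι → PontryaginDual G) (x : G) : ℂ :=
  ∏ i, (1 + ((χ i x : ℂ) + conj (χ i x : ℂ)) / 2)

def signVectors (ι : Type*) [Fintype ι] [DecidableEq ι] : Finset (ι → ℤ) :=
  Fintype.piFinset fun _ => {-1, 0, 1}

noncomputable def rieszWeight (ε : ι → ℤ) : ℝ :=
  ∏ i, (2⁻¹ : ℝ) ^ (ε i).natAbs

lemma rieszWeight_nonneg (ε : ι → ℤ) : 0 ≤ rieszWeight ε :=
  prod_nonneg fun _ _ => by positivity

lemma abs_le_one_of_mem_signVectors [DecidableEq ι] {ε : ι → ℤ} (hε : ε ∈ signVectors ι)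
    (i : ι) : |ε i| ≤ 1 := by
  have := Fintype.mem_piFinset.1 hε i
  simp only [mem_insert, mem_singleton] at this
  rcases this with h | h | h <;> simp [h]

lemma one_add_coe_add_conj_div_two (z : Circle) :
    1 + ((z : ℂ) + conj (z : ℂ)) / 2 =
      ∑ e ∈ ({-1, 0, 1} : Finset ℤ), (((2⁻¹ : ℝ) ^ e.natAbs : ℝ) : ℂ) * (z : ℂ) ^ e := by
  rw [sum_insert (by decide), sum_insert (by decide), sum_singleton, ← Circle.coe_inv_eq_conj,
    Circle.coe_inv, Int.natAbs_neg, Int.natAbs_one, Int.natAbs_zero, pow_one, pow_zero,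
    zpow_neg_one, zpow_zero, zpow_one, Complex.ofReal_one, Complex.ofReal_inv,
    Complex.ofReal_ofNat]
  ring

lemma rieszProduct_eq_sum [DecidableEq ι] (χ : ι → PontryaginDual G) (x : G) :
    rieszProduct χ x =
      ∑ ε ∈ signVectors ι, (rieszWeight ε : ℂ) * ((∏ i, χ i ^ ε i) x : ℂ) := by
  rw [rieszProduct, prod_congr rfl fun i _ => one_add_coe_add_conj_div_two (χ i x),
    prod_univ_sum]
  refine sum_congr rfl fun ε _ => ?_
  rw [PontryaginDual.coe_prod_zpow_apply, rieszWeight, Complex.ofReal_prod, ← prod_mul_distrib]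

lemma rieszProduct_eq_ofReal (χ : ι → PontryaginDual G) (x : G) :
    rieszProduct χ x = ((∏ i, (1 + (χ i x : ℂ).re) : ℝ) : ℂ) := by
  simp [rieszProduct, Complex.add_conj]

lemma rieszProduct_eq_norm (χ : ι → PontryaginDual G) (x : G) :
    rieszProduct χ x = ‖rieszProduct χ x‖ := by
  have hnonneg : 0 ≤ ∏ i, (1 + (χ i x : ℂ).re) := prod_nonneg fun i _ => by
    have := Complex.abs_re_le_norm (χ i x : ℂ)
    rw [Circle.norm_coe] at this
    linarith [neg_abs_le (χ i x : ℂ).re]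
  rw [rieszProduct_eq_ofReal, Complex.norm_real, Real.norm_of_nonneg hnonneg]

end RieszProduct

section RieszCoefficients

variable {ι G : Type*} [Fintype ι] [DecidableEq ι] [Group G] [TopologicalSpace G]
  [DecidableEq (PontryaginDual G)]

lemma sum_rieszWeight_eq_one (χ : ι → PontryaginDual G)
    (hword : ∀ ε ∈ signVectors ι, ∏ i, χ i ^ ε i = 1 → ε = 0) :
    ∑ ε ∈ signVectors ι with ∏ i, χ i ^ ε i = 1, rieszWeight ε = 1 := by
  have hzero : {ε ∈ signVectors ι | ∏ i, χ i ^ ε i = 1} = {0} := by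
    ext ε
    simp only [mem_filter, mem_singleton]
    constructor
    · exact fun ⟨hε, h⟩ => hword ε hε h
    · rintro rfl
      simp [signVectors]
  simp [hzero, rieszWeight]

lemma half_le_sum_rieszWeight (χ : ι → PontryaginDual G) (i : ι) :
    1 / 2 ≤ ∑ ε ∈ signVectors ι with ∏ j, χ j ^ ε j = χ i, rieszWeight ε := by
  have hweight : rieszWeight (Pi.single i 1 : ι → ℤ) = 1 / 2 := by
    rw [rieszWeight, Fintype.prod_eq_single i fun j hj => by simp [hj]]
    simp
  rw [← hweight]
  refine single_le_sum (fun ε _ => rieszWeight_nonneg ε) (mem_filter.2 ⟨?_, ?_⟩)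
  · simp only [signVectors, Fintype.mem_piFinset]
    intro j
    rcases eq_or_ne j i with rfl | hj <;> simp [*]
  · rw [Fintype.prod_eq_single i fun j hj => by simp [hj]]
    simp

variable [ContinuousMul G] [MeasurableSpace G] [BorelSpace G] (μ : Measure G)
  [IsProbabilityMeasure μ] [μ.IsMulLeftInvariant]

theorem integral_rieszProduct_mul_conj (χ : ι → PontryaginDual G) (ψ : PontryaginDual G) :
    ∫ x, rieszProduct χ x * conj (ψ x : ℂ) ∂μ =
      ((∑ ε ∈ signVectors ι with ∏ i, χ i ^ ε i = ψ, rieszWeight ε : ℝ) : ℂ) := by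
  simp_rw [rieszProduct_eq_sum, PontryaginDual.integral_sum_mul_conj]
  push_cast
  rfl

end RieszCoefficients

theorem riesz_product_properties_general {G : Type*} [CommGroup G] [TopologicalSpace G]
    [IsTopologicalGroup G] [MeasurableSpace G] [BorelSpace G]
    (μ : Measure G) [μ.IsHaarMeasure] [IsProbabilityMeasure μ]
    (P : Submonoid (PontryaginDual G))
    (hP : ∀ γ : PontryaginDual G, γ ∈ P → γ⁻¹ ∈ P → γ = 1)
    (K' : Finset (PontryaginDual G)) (hK'P : ∀ γ ∈ K', γ ∈ P ∧ γ ≠ 1)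
    (hlac : ∀ γ ∈ K', ∀ γ' ∈ K', γ ≠ γ' →
      (γ * γ'⁻¹ * γ'⁻¹ ∈ P ∧ γ * γ'⁻¹ * γ'⁻¹ ≠ 1) ∨
      (γ' * γ⁻¹ * γ⁻¹ ∈ P ∧ γ' * γ⁻¹ * γ⁻¹ ≠ 1))
    (R : G → ℂ) (hR : ∀ x, R x = ∏ γ' ∈ K', (1 + ((γ' x : ℂ) + conj ((γ' x : ℂ))) / 2)) :
    (∀ x, 0 ≤ (R x).re ∧ (R x).im = 0) ∧
    (∫ x, R x ∂μ) = 1 ∧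
    (∫ x, ‖R x‖ ∂μ) = 1 ∧
    (∀ γ' ∈ K', (1 : ℝ) / 2 ≤ (∫ x, R x * conj ((γ' x : ℂ)) ∂μ).re ∧
      (∫ x, R x * conj ((γ' x : ℂ)) ∂μ).im = 0) ∧
    (∀ γ : PontryaginDual G, γ ∉ P → γ⁻¹ ∉ P →
      ∫ x, R x * conj ((γ x : ℂ)) ∂μ = 0) := by
  classical
  let χ : K' → PontryaginDual G := (↑)
  obtain rfl : R = rieszProduct χ := funext fun x => (hR x).trans (prod_coe_sort K' _).symm
  have hword (ε) (hε : ε ∈ signVectors K') (hne : ε ≠ 0) :=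
    GroupCone.prod_zpow_mem_or_inv_mem_of_lacunary ⟨P, hP _⟩ (S := univ) (γ := χ)
      (fun i _ => hK'P i i.2) (fun i _ j _ hij => hlac i i.2 j j.2 (Subtype.coe_ne_coe.2 hij))
      (fun i _ => abs_le_one_of_mem_signVectors hε i)
      (by simpa [funext_iff] using hne)
  have hcoeff := integral_rieszProduct_mul_conj μ χ
  have hint : ∫ x, rieszProduct χ x ∂μ = 1 := by
    have h1 := hcoeff 1
    simp only [PontryaginDual.one_apply, Circle.coe_one, map_one, mul_one] at h1
    rw [h1, sum_rieszWeight_eq_one χ fun ε hε h => by_contra fun hne => ?_, Complex.ofReal_one]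
    exact (hword ε hε hne).elim (·.2 h) (·.2 (by rw [h, inv_one]))
  refine ⟨fun x => ?_, hint, ?_, fun γ hγ => ?_, fun ψ hψ hψ' => ?_⟩
  · rw [rieszProduct_eq_norm]
    simp
  · have h : ∫ x, rieszProduct χ x ∂μ = ((∫ x, ‖rieszProduct χ x‖ ∂μ : ℝ) : ℂ) := by
      rw [← integral_complex_ofReal]
      exact congrArg _ (funext fun x => rieszProduct_eq_norm χ x)
    exact_mod_cast h.symm.trans hint
  · rw [hcoeff ((⟨γ, hγ⟩ : K') : PontryaginDual G), Complex.ofReal_re, Complex.ofReal_im]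
    exact ⟨half_le_sum_rieszWeight χ ⟨γ, hγ⟩, rfl⟩
  · rw [hcoeff, Complex.ofReal_eq_zero, filter_false_of_mem fun ε hε hψε => ?_, sum_empty]
    subst hψε
    by_cases hne : ε = 0
    · simp [hne, one_mem] at hψ
    · exact (hword ε hε hne).elim (hψ ·.1) (hψ' ·.1)

/-- Properties of the finite Riesz product `R = ∏_{γ' ∈ K'} (1 + (γ' + conj γ')/2)` over a
finite strongly lacunary subset `K'` of the strictly positive cone `P \ {1}` of a partially
ordered dual of a compact abelian group `G`: `R ≥ 0`, `R̂(1) = 1`, `‖R‖₁ = 1`,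
`R̂(γ') ≥ 1/2` for `γ' ∈ K'`, and `R̂` vanishes outside `P ∪ P⁻¹`. -/
theorem riesz_product_properties {G : Type*} [CommGroup G] [TopologicalSpace G]
    [IsTopologicalGroup G] [CompactSpace G] [MeasurableSpace G] [BorelSpace G]
    (μ : Measure G) [μ.IsHaarMeasure] [IsProbabilityMeasure μ]
    (P : Submonoid (PontryaginDual G))
    (hP : ∀ γ : PontryaginDual G, γ ∈ P → γ⁻¹ ∈ P → γ = 1)
    (K' : Finset (PontryaginDual G)) (hK'P : ∀ γ ∈ K', γ ∈ P ∧ γ ≠ 1)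
    (hlac : ∀ γ ∈ K', ∀ γ' ∈ K', γ ≠ γ' →
      (γ * γ'⁻¹ * γ'⁻¹ ∈ P ∧ γ * γ'⁻¹ * γ'⁻¹ ≠ 1) ∨
      (γ' * γ⁻¹ * γ⁻¹ ∈ P ∧ γ' * γ⁻¹ * γ⁻¹ ≠ 1))
    (R : G → ℂ) (hR : ∀ x, R x = ∏ γ' ∈ K', (1 + ((γ' x : ℂ) + conj ((γ' x : ℂ))) / 2)) :
    (∀ x, 0 ≤ (R x).re ∧ (R x).im = 0) ∧
    (∫ x, R x ∂μ) = 1 ∧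
    (∫ x, ‖R x‖ ∂μ) = 1 ∧
    (∀ γ' ∈ K', (1 : ℝ) / 2 ≤ (∫ x, R x * conj ((γ' x : ℂ)) ∂μ).re ∧
      (∫ x, R x * conj ((γ' x : ℂ)) ∂μ).im = 0) ∧
    (∀ γ : PontryaginDual G, γ ∉ P → γ⁻¹ ∉ P →
      ∫ x, R x * conj ((γ x : ℂ)) ∂μ = 0) :=
  riesz_product_properties_general μ P hP K' hK'P hlac R hR
end

section
/- Let (k_j)_{j=1}^J be a sequence of integers and define Schur((k_j)) as the set of integers m = ∑_{j=1}^J ε_j k_j with integer coefficients ε_j such that: the full sum ∑ ε_j = 1; all partial sums ∑_{j'≤j} ε_{j'} are nonnegative; all partial sums after the first positive one are positive; and some partial sum exceeds 1. If k_{j+1} > 2k_j > 0 for all j (increasing strongly lacunary enumeration), then Schur((k_j)) ⊆ {n ∈ ℤ : n < 0}. -/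
private lemma tele_aux (k : ℕ → ℤ) (a b : ℕ) (h : a ≤ b) :
    ∑ j ∈ Finset.Ioc a b, (k (j+1) - k j) = k (b+1) - k (a+1) := by
  induction b, h using Nat.le_induction with
  | base => simp
  | succ b hb ih =>
    rw [Finset.sum_Ioc_succ_top (by omega), ih]
    ring

private lemma abel_aux (k ε : ℕ → ℤ) (J : ℕ) :
    ∑ j ∈ Finset.Ioc 0 (J+1), ε j * k j =
      (∑ j ∈ Finset.Ioc 0 (J+1), ε j) * k (J+1)
        - ∑ j ∈ Finset.Ioc 0 J, (∑ l ∈ Finset.Ioc 0 j, ε l) * (k (j+1) - k j) := by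
  induction J with
  | zero => simp
  | succ J ih =>
    rw [Finset.sum_Ioc_succ_top (Nat.zero_le _) (fun j => ε j * k j),
        Finset.sum_Ioc_succ_top (Nat.zero_le _) ε,
        Finset.sum_Ioc_succ_top (Nat.zero_le _)
          (fun j => (∑ l ∈ Finset.Ioc 0 j, ε l) * (k (j+1) - k j)), ih]
    ring

/-- The Schur set of a finite sequence `(k j)_{j=1}^J` of integers: all integers
`m = ∑_{j=1}^J ε j * k j` with integer coefficients such that the full sum of the `ε j` is `1`,
all partial sums are nonnegative, all partial sums after the first positive one are positive,
and some partial sum exceeds `1`. -/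
def SchurSet (J : ℕ) (k : ℕ → ℤ) : Set ℤ :=
  {m | ∃ ε : ℕ → ℤ,
    m = ∑ j ∈ Finset.Icc 1 J, ε j * k j ∧
    (∑ j ∈ Finset.Icc 1 J, ε j) = 1 ∧
    (∀ i, i ≤ J → 0 ≤ ∑ j ∈ Finset.Icc 1 i, ε j) ∧
    (∀ i i', i ≤ i' → i' ≤ J → 0 < ∑ j ∈ Finset.Icc 1 i, ε j →
      0 < ∑ j ∈ Finset.Icc 1 i', ε j) ∧
    (∃ i, i ≤ J ∧ 1 < ∑ j ∈ Finset.Icc 1 i, ε j)}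

/-- For an increasing strongly lacunary enumeration (`k (j+1) > 2 * k j > 0`), the Schur set
consists only of negative integers. -/
theorem schurSet_subset_neg (J : ℕ) (k : ℕ → ℤ)
    (hlac : ∀ j, 1 ≤ j → j < J → 2 * k j < k (j + 1) ∧ 0 < k j) :
    SchurSet J k ⊆ {n : ℤ | n < 0} := by
  intro m hm
  obtain ⟨ε, hmeq, hsum, hnn, hmono, i, hiJ, hibig⟩ := hm
  simp only [Set.mem_setOf_eq]
  have hIcc : ∀ n : ℕ, Finset.Icc 1 n = Finset.Ioc 0 n := fun n => Finset.Icc_add_one_left_eq_Ioc 0 n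
  simp only [hIcc] at hmeq hsum hnn hmono hibig
  set S : ℕ → ℤ := fun n => ∑ j ∈ Finset.Ioc 0 n, ε j with hS
  have hi1 : 1 ≤ i := by
    rcases Nat.eq_zero_or_pos i with h | h
    · subst h; simp at hibig
    · exact h
  have hiJne : i ≠ J := by rintro rfl; omega
  have hiJ' : i < J := lt_of_le_of_ne hiJ hiJne
  obtain ⟨J', rfl⟩ : ∃ J'', J = J'' + 1 := ⟨J - 1, by omega⟩
  have hiJ'' : i ≤ J' := by omega
  -- Abel summation
  rw [abel_aux, hsum, one_mul] at hmeq
  -- split the sum at i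
  have hsplit := Finset.sum_Ioc_consecutive
    (f := fun j => S j * (k (j+1) - k j)) (Nat.zero_le i) hiJ''
  beta_reduce at hsplit
  -- d j ≥ 0 for 1 ≤ j ≤ J'
  have hd : ∀ j : ℕ, 1 ≤ j → j ≤ J' → (0:ℤ) ≤ k (j+1) - k j := by
    intro j h1 h2
    obtain ⟨h3, h4⟩ := hlac j h1 (by omega)
    linarith
  -- lower bound on the first part
  have hb1 : 2 * (k (i+1) - k i) ≤ ∑ j ∈ Finset.Ioc 0 i, S j * (k (j+1) - k j) := by
    have hmem : i ∈ Finset.Ioc 0 i := Finset.mem_Ioc.mpr ⟨hi1, le_refl i⟩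
    have hsingle := Finset.single_le_sum (f := fun j => S j * (k (j+1) - k j))
      (fun j hj => by
        rw [Finset.mem_Ioc] at hj
        exact mul_nonneg (hnn j (by omega)) (hd j hj.1 (by omega))) hmem
    beta_reduce at hsingle
    have h2Si : (2:ℤ) ≤ S i := hibig
    have hdi : (0:ℤ) ≤ k (i+1) - k i := hd i hi1 hiJ''
    nlinarith [hsingle]
  -- lower bound on the second part
  have hb2 : k (J'+1) - k (i+1) ≤ ∑ j ∈ Finset.Ioc i J', S j * (k (j+1) - k j) := by
    rw [← tele_aux k i J' hiJ'']
    apply Finset.sum_le_sum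
    intro j hj
    rw [Finset.mem_Ioc] at hj
    have hSj : 1 ≤ S j := hmono i j (le_of_lt hj.1) (by omega) (by omega)
    have hdj : (0:ℤ) ≤ k (j+1) - k j := hd j (by omega) hj.2
    nlinarith
  have hkey := hlac i hi1 hiJ'
  rw [hmeq, ← hsplit]
  linarith [hb1, hb2, hkey.1]
end

section
/- In the setup of the analyzed proof, define Δk_j = k_{j+1} − k_j and sets G_{j+1} (1 ≤ j < J) consisting of all integers m = k_i − ∑_{j'=i}^{J−1} n_{j'} Δk_{j'} with 1 ≤ i ≤ min{j+1, J−1}, nonnegative integers n_{j'}, and, if i = j+1, some n_{j'} ≠ 0 (plus the analogous i = 1 family). Then these sets satisfy: k_j ∈ G_{j+1}; G_j ⊆ G_{j+1}; and G_{j+1} − Δk_j ⊆ G_j for 1 < j < J. -/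
/-- The set `G_{j+1}` of the paper (here `GSet k J j`, defined for `1 ≤ j < J`): all integers
`m = k i - ∑_{j'=i}^{J-1} n j' * Δk j'` with `1 ≤ i ≤ min (j+1) (J-1)`, nonnegative integer
coefficients `n j'`, and, when `i = j + 1`, some coefficient nonzero. -/
def GSet (k : ℕ → ℤ) (J j : ℕ) : Set ℤ :=
  {m | ∃ i : ℕ, 1 ≤ i ∧ i ≤ min (j + 1) (J - 1) ∧
    ∃ n : ℕ → ℕ,
      (i = j + 1 → ∃ j', i ≤ j' ∧ j' ≤ J - 1 ∧ n j' ≠ 0) ∧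
      m = k i - ∑ j' ∈ Finset.Icc i (J - 1), (n j' : ℤ) * (k (j' + 1) - k j')}

/-- The sets `G_{j+1}` satisfy the membership, nesting and shifted antinesting conditions:
`k j ∈ G_{j+1}`; `G_j ⊆ G_{j+1}`; and `G_{j+1} - Δk j ⊆ G_j` for `1 < j < J`. -/
theorem gSet_conditions (k : ℕ → ℤ) (J : ℕ) :
    (∀ j, 1 ≤ j → j < J → k j ∈ GSet k J j) ∧
    (∀ j, 1 < j → j < J → GSet k J (j - 1) ⊆ GSet k J j) ∧
    (∀ j, 1 < j → j < J → ∀ m ∈ GSet k J j,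
      m - (k (j + 1) - k j) ∈ GSet k J (j - 1)) := by
  refine ⟨?_, ?_, ?_⟩
  · -- membership: k j ∈ G_{j+1}
    intro j hj hjJ
    refine ⟨j, hj, ?_, fun _ => 0, ?_, ?_⟩
    · rw [le_min_iff]; omega
    · intro h; omega
    · simp
  · -- nesting
    intro j hj hjJ m hm
    obtain ⟨i, hi1, hi2, n, hcond, hm⟩ := hm
    rw [le_min_iff] at hi2
    refine ⟨i, hi1, ?_, n, ?_, hm⟩
    · rw [le_min_iff]; omega
    · intro h; omega
  · -- shifted antinesting
    intro j hj hjJ m hm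
    obtain ⟨i, hi1, hi2, n, hcond, hm⟩ := hm
    rw [le_min_iff] at hi2
    by_cases hij : i ≤ j
    · refine ⟨i, hi1, ?_, fun j' => n j' + if j' = j then 1 else 0, ?_, ?_⟩
      · rw [le_min_iff]; omega
      · intro h
        exact ⟨j, by omega, by omega, by simp⟩
      · have hjmem : j ∈ Finset.Icc i (J - 1) := by
          rw [Finset.mem_Icc]; omega
        have hsum : ∑ j' ∈ Finset.Icc i (J - 1),
              ((n j' + if j' = j then 1 else 0 : ℕ) : ℤ) * (k (j' + 1) - k j')
            = (∑ j' ∈ Finset.Icc i (J - 1), (n j' : ℤ) * (k (j' + 1) - k j'))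
              + (k (j + 1) - k j) := by
          have hcongr : ∀ x ∈ Finset.Icc i (J - 1),
              ((n x + if x = j then 1 else 0 : ℕ) : ℤ) * (k (x + 1) - k x)
              = (n x : ℤ) * (k (x + 1) - k x)
                + (if x = j then (k (x + 1) - k x) else 0) := by
            intro x hx; split_ifs with h <;> push_cast <;> ring
          rw [Finset.sum_congr rfl hcongr, Finset.sum_add_distrib,
            Finset.sum_ite_eq' _ j, if_pos hjmem]
        rw [hm, hsum]; ring
    · have hi : i = j + 1 := by omega
      obtain ⟨j₀, hj₀1, hj₀2, hj₀3⟩ := hcond hi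
      refine ⟨j, by omega, ?_, fun j' => if j' = j then 0 else n j', ?_, ?_⟩
      · rw [le_min_iff]; omega
      · intro _
        exact ⟨j₀, by omega, hj₀2, by simp [show j₀ ≠ j by omega, hj₀3]⟩
      · have hsum : ∑ j' ∈ Finset.Icc j (J - 1),
              ((if j' = j then 0 else n j' : ℕ) : ℤ) * (k (j' + 1) - k j')
            = ∑ j' ∈ Finset.Icc (j + 1) (J - 1), (n j' : ℤ) * (k (j' + 1) - k j') := by
          rw [← Finset.sum_subset (Finset.Icc_subset_Icc_left (Nat.le_succ j))
            (fun x hxt hxs => ?_)]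
          · refine Finset.sum_congr rfl fun x hx => ?_
            rw [if_neg (by simp only [Finset.mem_Icc] at hx; omega)]
          · simp only [Finset.mem_Icc] at hxt hxs
            rw [if_pos (by omega)]
            simp
        rw [hm, hi, hsum]; ring
end

section
/- Let sets G_{j+1} ⊆ ℤ (for 1 ≤ j < J) satisfy: k_j ∈ G_{j+1}; G_j ⊆ G_{j+1} for 1 < j < J; and G_{j+1} − Δk_j ⊆ G_j for 1 < j < J, where Δk_j = k_{j+1} − k_j. Then for all integers 1 < i ≤ i' < J and any positive integers m_i,…,m_{i'}, the set G_{i'+1} − ∑_{j'=i}^{i'} m_{j'} Δk_{j'} is contained in G_i; in particular k_{i'} − ∑_{j'=i}^{i'} m_{j'} Δk_{j'} ∈ G_i. -/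
/-! Each level can be descended any positive number of times: after one step
`x - Δk_j ∈ G_j ⊆ G_{j+1}` we are back in `G_{j+1}` and may subtract `Δk_j` again.
Composing these descents from level `i'` down to level `i` gives the claim, and the
"in particular" is the case `x = k_{i'} ∈ G_{i'+1}`. -/

open Finset

theorem sub_mul_mem_of_subset_of_sub_mem {A B : Set ℤ} {d : ℤ} (hAB : A ⊆ B)
    (hsub : ∀ x ∈ B, x - d ∈ A) {c : ℤ} (hc : 0 < c) : ∀ x ∈ B, x - c * d ∈ A := by
  induction c, (hc : 1 ≤ c) using Int.leInduction with
  | base => simpa using hsub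
  | succ c _ ih =>
    intro x hx
    have hstep := hsub _ (hAB (ih x hx))
    rwa [show x - c * d - d = x - (c + 1) * d by ring] at hstep

theorem sub_sum_mem_of_forall_sub_mem {G : ℕ → Set ℤ} {m d : ℕ → ℤ} {i i' : ℕ}
    (hii' : i ≤ i') (hstep : ∀ j, i ≤ j → j ≤ i' → ∀ x ∈ G (j + 1), x - m j * d j ∈ G j) :
    ∀ x ∈ G (i' + 1), x - ∑ j ∈ Icc i i', m j * d j ∈ G i := by
  induction i', hii' using Nat.le_induction with
  | base =>
    simpa using hstep i le_rfl le_rfl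
  | succ n hin ih =>
    intro x hx
    have htop := hstep (n + 1) (by omega) le_rfl x hx
    have hrest := ih (fun j hij hjn => hstep j hij (by omega)) _ htop
    rw [sum_Icc_succ_top (by omega)]
    rwa [show x - m (n + 1) * d (n + 1) - ∑ j ∈ Icc i n, m j * d j
      = x - (∑ j ∈ Icc i n, m j * d j + m (n + 1) * d (n + 1)) by ring] at hrest

/-- Iteration lemma: if the sets `Gs (j+1)` (playing the role of `G_{j+1}` for `1 ≤ j < J`)
satisfy `k j ∈ Gs (j+1)`, `Gs j ⊆ Gs (j+1)` for `1 < j < J`, and `Gs (j+1) - Δk j ⊆ Gs j` for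
`1 < j < J`, then for all `1 < i ≤ i' < J` and positive integers `m i, …, m i'`, the set
`Gs (i'+1) - ∑_{j'=i}^{i'} m j' * Δk j'` is contained in `Gs i`; in particular
`k i' - ∑_{j'=i}^{i'} m j' * Δk j' ∈ Gs i`. -/
theorem gSet_iteration (J : ℕ) (k : ℕ → ℤ) (Gs : ℕ → Set ℤ)
    (hmem : ∀ j, 1 ≤ j → j < J → k j ∈ Gs (j + 1))
    (hnest : ∀ j, 1 < j → j < J → Gs j ⊆ Gs (j + 1))
    (hanti : ∀ j, 1 < j → j < J → ∀ x ∈ Gs (j + 1), x - (k (j + 1) - k j) ∈ Gs j) :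
    ∀ i i' : ℕ, 1 < i → i ≤ i' → i' < J → ∀ m : ℕ → ℤ,
      (∀ j', i ≤ j' → j' ≤ i' → 0 < m j') →
      (∀ x ∈ Gs (i' + 1),
        x - ∑ j' ∈ Finset.Icc i i', m j' * (k (j' + 1) - k j') ∈ Gs i) ∧
      k i' - ∑ j' ∈ Finset.Icc i i', m j' * (k (j' + 1) - k j') ∈ Gs i := by
  intro i i' hi hii' hi'J m hm
  have hdescend : ∀ x ∈ Gs (i' + 1),
      x - ∑ j' ∈ Finset.Icc i i', m j' * (k (j' + 1) - k j') ∈ Gs i :=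
    sub_sum_mem_of_forall_sub_mem hii' fun j hij hji' =>
      sub_mul_mem_of_subset_of_sub_mem (hnest j (by omega) (by omega))
        (hanti j (by omega) (by omega)) (hm j hij hji')
  exact ⟨hdescend, hdescend _ (hmem i' (by omega) hi'J)⟩
end
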